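/- A directed graph G on n ≥ 1 vertices has at most n − 1 vertex-resilient blocks. -/

import Mathlib

variable {V : Type*}

/-- Mutual reachability (strong connectivity of a pair) in the digraph `E`. -/
def SConn (E : V → V → Prop) (u v : V) : Prop :=
  Relation.ReflTransGen E u v ∧ Relation.ReflTransGen E v u

/-- The digraph obtained from `E` by deleting vertex `w` (and incident edges). -/
def delV (E : V → V → Prop) (w : V) : V → V → Prop :=
  fun a b => E a b ∧ a ≠ w ∧ b ≠ w

/-- The digraph obtained from `E` by deleting the single edge `(a,b)`. -/
def delE (E : V → V → Prop) (a b : V) : V → V → Prop :=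
  fun x y => E x y ∧ ¬(x = a ∧ y = b)

/-- `u` and `v` are vertex-resilient: they are distinct and remain strongly
connected after deletion of any single other vertex. -/
def VRes (E : V → V → Prop) (u v : V) : Prop :=
  u ≠ v ∧ ∀ w, w ≠ u → w ≠ v → SConn (delV E w) u v

/-- A vertex-resilient block: a maximal set of size ≥ 2 of pairwise
vertex-resilient vertices. -/
def IsVRBlock (E : V → V → Prop) (B : Set V) : Prop :=
  B.Pairwise (VRes E) ∧ (∃ a ∈ B, ∃ b ∈ B, a ≠ b) ∧
    ∀ B' : Set V, B ⊆ B' → B'.Pairwise (VRes E) → B' = B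

/-- `l` is (the vertex list of) a directed path from `u` to `v` in `E`. -/
def IsPathList (E : V → V → Prop) (u v : V) (l : List V) : Prop :=
  l.Chain' E ∧ l.head? = some u ∧ l.getLast? = some v

/-- The internal vertices of a path given as a vertex list. -/
def internalsL (l : List V) : List V := (l.drop 1).dropLast

/-- The edges of a path given as a vertex list. -/
def edgesOfL (l : List V) : List (V × V) := l.zip l.tail

/-- There exist two internally vertex-disjoint (simple, distinct) paths from `u` to `v`. -/
def TwoVPaths (E : V → V → Prop) (u v : V) : Prop :=
  ∃ l₁ l₂ : List V, IsPathList E u v l₁ ∧ IsPathList E u v l₂ ∧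
    l₁.Nodup ∧ l₂.Nodup ∧ l₁ ≠ l₂ ∧ ∀ x ∈ internalsL l₁, x ∉ internalsL l₂

/-- `u` and `v` are 2-vertex-connected. -/
def TwoVConn (E : V → V → Prop) (u v : V) : Prop :=
  u ≠ v ∧ TwoVPaths E u v ∧ TwoVPaths E v u

/-- There exist two edge-disjoint paths from `u` to `v`. -/
def TwoEPaths (E : V → V → Prop) (u v : V) : Prop :=
  ∃ l₁ l₂ : List V, IsPathList E u v l₁ ∧ IsPathList E u v l₂ ∧
    ∀ e ∈ edgesOfL l₁, e ∉ edgesOfL l₂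

/-- `u` and `v` are 2-edge-connected. -/
def TwoEConn (E : V → V → Prop) (u v : V) : Prop :=
  u ≠ v ∧ TwoEPaths E u v ∧ TwoEPaths E v u

/-- A 2-vertex-connected block. -/
def Is2VBlock (E : V → V → Prop) (B : Set V) : Prop :=
  B.Pairwise (TwoVConn E) ∧ (∃ a ∈ B, ∃ b ∈ B, a ≠ b) ∧
    ∀ B' : Set V, B ⊆ B' → B'.Pairwise (TwoVConn E) → B' = B

/-- A 2-edge-connected block. -/
def Is2EBlock (E : V → V → Prop) (B : Set V) : Prop :=
  B.Pairwise (TwoEConn E) ∧ (∃ a ∈ B, ∃ b ∈ B, a ≠ b) ∧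
    ∀ B' : Set V, B ⊆ B' → B'.Pairwise (TwoEConn E) → B' = B

/-- The digraph `E` is strongly connected. -/
def StronglyConn (E : V → V → Prop) : Prop :=
  ∀ u v, Relation.ReflTransGen E u v

/-- `(a,b)` is a strong bridge of the strongly connected digraph `E`. -/
def IsStrongBridge (E : V → V → Prop) (a b : V) : Prop :=
  E a b ∧ ¬ StronglyConn (delE E a b)

/-- `u` dominates `w` in the flow graph with start vertex `s`:
every path from `s` to `w` contains `u`. -/
def DomOf (E : V → V → Prop) (s u w : V) : Prop :=
  ∀ l : List V, IsPathList E s w l → u ∈ l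

/-- `d` is the immediate dominator of `w` in the flow graph with start `s`:
the proper dominator of `w` dominated by all proper dominators of `w`. -/
def IdomOf (E : V → V → Prop) (s d w : V) : Prop :=
  d ≠ w ∧ DomOf E s d w ∧ ∀ u, u ≠ w → DomOf E s u w → DomOf E s u d

/-- The block graph `F` of the digraph `E`: the bipartite undirected graph on the
vertices of `E` together with its vertex-resilient blocks, a vertex `u` being
adjacent to a block node `B` exactly when `u ∈ B`. -/
def blockGraph (E : V → V → Prop) :
    SimpleGraph (V ⊕ {B : Set V // IsVRBlock E B}) where
  Adj a b := ∃ u B, u ∈ B.1 ∧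
    ((a = Sum.inl u ∧ b = Sum.inr B) ∨ (a = Sum.inr B ∧ b = Sum.inl u))
  symm := by
    constructor
    rintro a b ⟨u, B, hm, (⟨rfl, rfl⟩ | ⟨rfl, rfl⟩)⟩
    · exact ⟨u, B, hm, Or.inr ⟨rfl, rfl⟩⟩
    · exact ⟨u, B, hm, Or.inl ⟨rfl, rfl⟩⟩
  loopless := by
    constructor
    rintro a ⟨u, B, hm, (⟨rfl, h⟩ | ⟨rfl, h⟩)⟩ <;> simp at h

/-!
If `x` and `y` are both vertex-resilient with `m` and are joined by a chain of vertex-resilient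
pairs avoiding `m`, then deleting any vertex `w` leaves either that chain or `x, m, y` intact, so
`x` and `y` are vertex-resilient. Hence the resilience graph has the cycle property of block
graphs, and the first vertex `v` of a longest resilience path is simplicial: each neighbour of `v`
lies on the path, and the path joins any two of them avoiding `v`. So at most one block contains
`v`, every other block survives the deletion of `v`, and induction on the number of vertices
bounds the number of blocks by `n - 1`.
-/

variable {α : Type*}

theorem List.IsChain.rel_of_mem_of_equivalence {S : α → α → Prop} (hS : Equivalence S)
    {l : List α} (hl : l.IsChain S) {x y : α} (hx : x ∈ l) (hy : y ∈ l) : S x y := by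
  obtain _ | ⟨a, t⟩ := l
  · simp at hx
  have hfrom_head := hl.induction (S a ·) _ (fun _ _ h₁ h₂ => hS.trans h₂ h₁)
    (fun _ => hS.refl a)
  exact hS.trans (hS.symm (hfrom_head x hx)) (hfrom_head y hy)

/-- For symmetric `R` this is equivalent to every cycle of the graph of `R` spanning a clique. -/
def DetourClosed (R : α → α → Prop) : Prop :=
  ∀ ⦃m x y : α⦄ ⦃t : List α⦄, t.IsChain R → m ∉ t → x ∈ t → y ∈ t → x ≠ y →
    R m x → R m y → R x y

def IsBlockIn (R : α → α → Prop) (U K : Set α) : Prop :=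
  K.Nontrivial ∧ Maximal (fun K => K ⊆ U ∧ K.Pairwise R) K

namespace IsBlockIn

variable {R : α → α → Prop} {U K : Set α}

theorem subset (hK : IsBlockIn R U K) : K ⊆ U := hK.2.prop.1

theorem sdiff_singleton {v : α} (hK : IsBlockIn R U K) (hv : v ∉ K) :
    IsBlockIn R (U \ {v}) K :=
  ⟨hK.1, hK.2.mono (fun _ h => ⟨h.1.trans Set.sdiff_subset, h.2⟩)
    ⟨Set.subset_sdiff_singleton hK.subset hv, hK.2.prop.2⟩⟩

theorem eq_insert_of_mem {v : α} (hK : IsBlockIn R U K) (hvK : v ∈ K)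
    (hclique : (insert v {x ∈ U | R v x}).Pairwise R) : K = insert v {x ∈ U | R v x} := by
  have hKN : K ⊆ insert v {x ∈ U | R v x} := fun x hx =>
    (eq_or_ne x v).elim Or.inl fun hxv => Or.inr ⟨hK.subset hx, hK.2.prop.2 hvK hx hxv.symm⟩
  exact hKN.antisymm <| hK.2.2
    ⟨Set.insert_subset (hK.subset hvK) (Set.sep_subset _ _), hclique⟩ hKN

end IsBlockIn

section Blocks

variable {R : α → α → Prop} {U : Set α}

def IsPathIn (R : α → α → Prop) (U : Set α) (l : List α) : Prop :=
  l.Nodup ∧ l.IsChain R ∧ ∀ z ∈ l, z ∈ U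

theorem IsPathIn.length_le_ncard {l : List α} (hl : IsPathIn R U l) (hU : U.Finite) :
    l.length ≤ U.ncard := by
  classical
  rw [← List.toFinset_card_of_nodup hl.1, Set.ncard_eq_toFinset_card U hU]
  exact Finset.card_le_card fun z hz => by simpa using hl.2.2 z (List.mem_toFinset.mp hz)

theorem exists_longest_isPathIn (hU : U.Finite) :
    ∃ l, IsPathIn R U l ∧ ∀ l', IsPathIn R U l' → l'.length ≤ l.length := by
  classical
  obtain ⟨l, hl, hlen⟩ := Nat.findGreatest_spec
    (P := fun n => ∃ l, IsPathIn R U l ∧ l.length = n) (Nat.zero_le U.ncard)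
    ⟨[], by simp [IsPathIn], rfl⟩
  exact ⟨l, hl, fun l' hl' => hlen ▸ Nat.le_findGreatest (hl'.length_le_ncard hU) ⟨l', hl', rfl⟩⟩

theorem exists_simplicial_vertex [Std.Symm R] (hR : DetourClosed R)
    (hU : U.Finite) (hne : U.Nonempty) :
    ∃ v ∈ U, (insert v {x ∈ U | R v x}).Pairwise R := by
  obtain ⟨l, ⟨hnd, hch, hlU⟩, hmax⟩ := exists_longest_isPathIn (R := R) hU
  obtain _ | ⟨v, t⟩ := l
  · obtain ⟨u, hu⟩ := hne
    have := hmax [u] ⟨List.nodup_singleton u, List.isChain_singleton u, by simpa using hu⟩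
    simp at this
  have hnbr_mem : ∀ x ∈ U, R v x → x ≠ v → x ∈ t := by
    intro x hxU hvx hxv
    by_contra hxt
    have hx : x ∉ v :: t := by simp [hxv, hxt]
    have := hmax (x :: v :: t) ⟨List.nodup_cons.mpr ⟨hx, hnd⟩,
      hch.cons_cons (symm_of R hvx), by simpa [hxU] using hlU⟩
    simp at this
  have hvt : v ∉ t := (List.nodup_cons.mp hnd).1
  refine ⟨v, hlU v List.mem_cons_self, Set.pairwise_insert.mpr ⟨?_, ?_⟩⟩
  · rintro x ⟨hxU, hvx⟩ y ⟨hyU, hvy⟩ hxy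
    obtain rfl | hxv := eq_or_ne x v
    · exact hvy
    obtain rfl | hyv := eq_or_ne y v
    · exact symm_of R hvx
    exact hR hch.tail hvt (hnbr_mem x hxU hvx hxv) (hnbr_mem y hyU hvy hyv) hxy hvx hvy
  · rintro x ⟨-, hvx⟩ -
    exact ⟨hvx, symm_of R hvx⟩

theorem ncard_setOf_isBlockIn_le [Std.Symm R] (hR : DetourClosed R) (hU : U.Finite) :
    {K | IsBlockIn R U K}.ncard ≤ U.ncard - 1 := by
  induction hn : U.ncard using Nat.strong_induction_on generalizing U with
  | _ n ih =>
  obtain hempty | ⟨K, hK⟩ := Set.eq_empty_or_nonempty {K | IsBlockIn R U K}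
  · simp [hempty]
  have hUn : 1 < n :=
    hn ▸ Set.one_lt_ncard_iff_nontrivial_and_finite.mpr ⟨hK.1.mono hK.subset, hU⟩
  obtain ⟨v, hvU, hclique⟩ :=
    exists_simplicial_vertex hR hU (hK.1.nonempty.mono hK.subset)
  have hU' : (U \ {v}).Finite := hU.sdiff
  have hblocks : {K | IsBlockIn R U K} ⊆
      insert (insert v {x ∈ U | R v x}) {K | IsBlockIn R (U \ {v}) K} := by
    intro K hK
    by_cases hvK : v ∈ K
    · exact Or.inl (hK.eq_insert_of_mem hvK hclique)
    · exact Or.inr (hK.sdiff_singleton hvK)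
  have hblocks_fin : {K | IsBlockIn R (U \ {v}) K}.Finite :=
    hU'.finite_subsets.subset fun _ hK => hK.subset
  have hsmaller := ih (n - 1) (by omega) hU' (by rw [Set.ncard_sdiff_singleton_of_mem hvU, hn])
  calc {K | IsBlockIn R U K}.ncard
      ≤ (insert (insert v {x ∈ U | R v x}) {K | IsBlockIn R (U \ {v}) K}).ncard :=
        Set.ncard_le_ncard hblocks (hblocks_fin.insert _)
    _ ≤ {K | IsBlockIn R (U \ {v}) K}.ncard + 1 := Set.ncard_insert_le _ _
    _ ≤ n - 1 := by omega

end Blocks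

theorem equivalence_sconn (F : V → V → Prop) : Equivalence (SConn F) :=
  ⟨fun _ => ⟨.refl, .refl⟩, fun h => ⟨h.2, h.1⟩, fun h h' => ⟨h.1.trans h'.1, h'.2.trans h.2⟩⟩

instance (E : V → V → Prop) : Std.Symm (VRes E) :=
  ⟨fun _ _ h => ⟨h.1.symm, fun w hwu hwv => (equivalence_sconn _).symm (h.2 w hwv hwu)⟩⟩

theorem sconn_delV_of_isChain {E : V → V → Prop} {w : V} {t : List V}
    (ht : t.IsChain (VRes E)) (hw : w ∉ t) {x y : V} (hx : x ∈ t) (hy : y ∈ t) :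
    SConn (delV E w) x y :=
  (ht.imp_of_mem_imp fun _ _ ha hb hab =>
      hab.2 w (ne_of_mem_of_not_mem ha hw).symm (ne_of_mem_of_not_mem hb hw).symm)
    |>.rel_of_mem_of_equivalence (equivalence_sconn _) hx hy

theorem detourClosed_vRes (E : V → V → Prop) : DetourClosed (VRes E) := by
  intro m x y t ht hmt hx hy hxy hmx hmy
  refine ⟨hxy, fun w hwx hwy => ?_⟩
  obtain rfl | hwm := eq_or_ne w m
  · exact sconn_delV_of_isChain ht hmt hx hy
  · exact (equivalence_sconn _).trans ((equivalence_sconn _).symm (hmx.2 w hwm hwx))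
      (hmy.2 w hwm hwy)

theorem isVRBlock_iff_isBlockIn_univ (E : V → V → Prop) (B : Set V) :
    IsVRBlock E B ↔ IsBlockIn (VRes E) Set.univ B := by
  constructor
  · rintro ⟨hpair, hnt, hmax⟩
    exact ⟨hnt, ⟨Set.subset_univ _, hpair⟩, fun B' hB' hle => (hmax B' hle hB'.2).le⟩
  · rintro ⟨hnt, ⟨-, hpair⟩, hmax⟩
    exact ⟨hpair, hnt, fun B' hle hB' => (hmax ⟨Set.subset_univ _, hB'⟩ hle).antisymm hle⟩

theorem stmt4 [Fintype V] (E : V → V → Prop) :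
    {B : Set V | IsVRBlock E B}.ncard ≤ Fintype.card V - 1 := by
  simpa only [← isVRBlock_iff_isBlockIn_univ, Set.ncard_univ, Nat.card_eq_fintype_card] using
    ncard_setOf_isBlockIn_le (detourClosed_vRes E) Set.finite_univ
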